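/- arXiv:2511.13080 — 2 statements merged into one kernel-verified Lean document; each statement's English description precedes it below -/
import Mathlib

section
/- Let A, k, λ > 0, τ ≥ 0, and U(α,τ) = (Ak/(k+λ))(1 − e^{−(k+λ)α}) + τe^{−λα}. Define M(τ) = sup_{α ≥ 0} U(α,τ) and r = λτ/(Ak). Then: if 0 < r < 1, M(τ) = (Ak/(k+λ))(1 − r^{1+λ/k}) + τ·r^{λ/k}; otherwise M(τ) = max{τ, Ak/(k+λ)}. In particular M(0) = Ak/(k+λ). -/
open Real Set

lemma amgm_core (p x z : ℝ) (hp : 0 < p) (hx : 0 ≤ x) (hz : 0 ≤ z) :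
    x ^ p * z ≤ ((p * x + z) / (p + 1)) ^ (p + 1) := by
  have hp1 : (0:ℝ) < p + 1 := by linarith
  have hsum : p / (p + 1) + 1 / (p + 1) = 1 := by field_simp
  have h := Real.geom_mean_le_arith_mean2_weighted
    (by positivity : (0:ℝ) ≤ p / (p + 1)) (by positivity : (0:ℝ) ≤ 1 / (p + 1)) hx hz hsum
  have hm : p / (p + 1) * x + 1 / (p + 1) * z = (p * x + z) / (p + 1) := by ring
  rw [hm] at h
  have hL : 0 ≤ x ^ (p / (p + 1)) * z ^ (1 / (p + 1)) := by positivity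
  have h2 := Real.rpow_le_rpow hL h hp1.le
  calc x ^ p * z = (x ^ (p / (p + 1)) * z ^ (1 / (p + 1))) ^ (p + 1) := by
        rw [Real.mul_rpow (by positivity) (by positivity),
            ← Real.rpow_mul hx, ← Real.rpow_mul hz,
            div_mul_cancel₀ _ hp1.ne', div_mul_cancel₀ _ hp1.ne', Real.rpow_one]
    _ ≤ _ := h2

lemma keyA (p r x : ℝ) (hp : 0 < p) (hr : 0 < r) (hx : 0 ≤ x) :
    x ^ p * (r * (p + 1) - p * x) ≤ r ^ (p + 1) := by
  rcases le_or_gt 0 (r * (p + 1) - p * x) with hz | hz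
  · have h := amgm_core p x _ hp hx hz
    have hm : (p * x + (r * (p + 1) - p * x)) / (p + 1) = r := by
      field_simp
      ring
    rwa [hm] at h
  · exact (mul_nonpos_of_nonneg_of_nonpos (Real.rpow_nonneg hx p) hz.le).trans
      (Real.rpow_nonneg hr.le _)

/-- Closed form of the delay envelope `M(τ) = sup_{α ≥ 0} U(α,τ)`. -/
theorem stmt_1 (A k lam τ : ℝ) (hA : 0 < A) (hk : 0 < k) (hlam : 0 < lam)
    (hτ : 0 ≤ τ)
    (U : ℝ → ℝ)
    (hU : U = fun α => (A * k / (k + lam)) * (1 - Real.exp (-(k + lam) * α))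
      + τ * Real.exp (-lam * α))
    (M : ℝ) (hM : M = sSup (U '' Ici 0)) (r : ℝ) (hr : r = lam * τ / (A * k)) :
    ((0 < r ∧ r < 1) →
      M = (A * k / (k + lam)) * (1 - r ^ (1 + lam / k)) + τ * r ^ (lam / k))
    ∧ (¬ (0 < r ∧ r < 1) → M = max τ (A * k / (k + lam)))
    ∧ (τ = 0 → M = A * k / (k + lam)) := by
  have hkl : 0 < k + lam := by linarith
  set C := A * k / (k + lam) with hC
  have hC0 : 0 < C := by positivity
  set p := lam / k with hp
  have hp0 : 0 < p := by positivity
  have hτ' : lam * τ = r * (A * k) := by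
    rw [hr]; field_simp
  -- rewrite of U in terms of x = exp (-(k*α))
  have hUx : ∀ α : ℝ, U α = C + Real.exp (-(k * α)) ^ p * (τ - C * Real.exp (-(k * α))) := by
    intro α
    have hxpos : 0 < Real.exp (-(k * α)) := Real.exp_pos _
    have h1 : Real.exp (-(k * α)) ^ p = Real.exp (-(lam * α)) := by
      rw [Real.rpow_def_of_pos hxpos, Real.log_exp, hp]
      congr 1
      field_simp
    have h2 : Real.exp (-(k + lam) * α) = Real.exp (-(k * α)) * Real.exp (-(lam * α)) := by
      rw [← Real.exp_add]; ring_nf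
    rw [hU]
    simp only
    rw [h2, ← h1]
    have : -lam * α = -(lam * α) := by ring
    rw [this, ← h1]
    ring
  have hne : (U '' Ici 0).Nonempty := ⟨U 0, 0, self_mem_Ici, rfl⟩
  -- Fact 1 : 0 < r < 1
  have fact1 : (0 < r ∧ r < 1) → M = C * (1 - r ^ (1 + p)) + τ * r ^ p := by
    rintro ⟨hr0, hr1⟩
    have hlogr : Real.log r < 0 := Real.log_neg hr0 hr1
    set α₀ := -Real.log r / k with hα₀
    have hα₀0 : (0:ℝ) ≤ α₀ := div_nonneg (by linarith) hk.le
    have hxα₀ : Real.exp (-(k * α₀)) = r := by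
      rw [hα₀]
      have : -(k * (-Real.log r / k)) = Real.log r := by field_simp
      rw [this, Real.exp_log hr0]
    have hval : U α₀ = C + r ^ p * (τ - C * r) := by rw [hUx α₀, hxα₀]
    have htarget : C * (1 - r ^ (1 + p)) + τ * r ^ p = C + r ^ p * (τ - C * r) := by
      rw [Real.rpow_add hr0, Real.rpow_one]; ring
    have hub : ∀ v ∈ U '' Ici 0, v ≤ C + r ^ p * (τ - C * r) := by
      rintro v ⟨α, hα, rfl⟩
      rw [hUx α]
      set x := Real.exp (-(k * α)) with hxdef
      have hx0 : 0 < x := Real.exp_pos _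
      have key := keyA p r x hp0 hr0 hx0.le
      have hrp1 : r ^ (p + 1) = r ^ p * r := by
        rw [Real.rpow_add hr0, Real.rpow_one]
      set E := A * k * k / (lam * (k + lam)) with hE
      have hE0 : 0 < E := by positivity
      have e1 : τ - C * x = E * (r * (p + 1) - p * x) := by
        rw [hC, hE, hp]
        field_simp
        linear_combination (k + lam) * hτ'
      have e2 : τ - C * r = E * r := by
        rw [hC, hE]
        field_simp
        linear_combination (k + lam) * hτ'
      rw [e1, e2]
      calc C + x ^ p * (E * (r * (p + 1) - p * x))
          = C + E * (x ^ p * (r * (p + 1) - p * x)) := by ring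
        _ ≤ C + E * r ^ (p + 1) := by
            have := mul_le_mul_of_nonneg_left key hE0.le
            linarith
        _ = C + r ^ p * (E * r) := by rw [hrp1]; ring
    have hgr : IsGreatest (U '' Ici 0) (C + r ^ p * (τ - C * r)) :=
      ⟨⟨α₀, hα₀0, hval⟩, hub⟩
    rw [hM, hgr.csSup_eq, htarget]
  -- Fact 2 : τ = 0
  have fact2 : τ = 0 → M = C := by
    intro hτ0
    subst hτ0
    have hub : ∀ v ∈ U '' Ici 0, v ≤ C := by
      rintro v ⟨α, hα, rfl⟩
      rw [hU]
      simp only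
      nlinarith [Real.exp_pos (-(k + lam) * α), hC0]
    have htend : Filter.Tendsto U Filter.atTop (nhds C) := by
      have h1 : Filter.Tendsto (fun α : ℝ => -(k + lam) * α) Filter.atTop Filter.atBot :=
        Filter.Tendsto.const_mul_atTop_of_neg (by linarith) Filter.tendsto_id
      have h2 : Filter.Tendsto (fun α : ℝ => Real.exp (-(k + lam) * α))
          Filter.atTop (nhds 0) := Real.tendsto_exp_atBot.comp h1
      have h3 : Filter.Tendsto (fun α : ℝ => -lam * α) Filter.atTop Filter.atBot :=
        Filter.Tendsto.const_mul_atTop_of_neg (by linarith) Filter.tendsto_id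
      have h4 : Filter.Tendsto (fun α : ℝ => Real.exp (-lam * α))
          Filter.atTop (nhds 0) := Real.tendsto_exp_atBot.comp h3
      rw [hU]
      have h5 : Filter.Tendsto
          (fun α : ℝ => C * (1 - Real.exp (-(k + lam) * α)) + 0 * Real.exp (-lam * α))
          Filter.atTop (nhds (C * ((1:ℝ) - 0) + 0 * 0)) :=
        ((tendsto_const_nhds.sub h2).const_mul C).add (h4.const_mul (0:ℝ))
      simpa using h5
    have hlub : IsLUB (U '' Ici 0) C := by
      constructor
      · intro v hv; exact hub v hv
      · intro b hb
        refine le_of_tendsto htend ?_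
        filter_upwards [Filter.eventually_ge_atTop (0:ℝ)] with α hα
        exact hb ⟨α, hα, rfl⟩
    rw [hM, hlub.csSup_eq hne]
  -- Fact 3 : 1 ≤ r
  have fact3 : 1 ≤ r → M = τ := by
    intro hr1
    have hU0 : U 0 = τ := by rw [hU]; simp
    have hτA : A * k ≤ lam * τ := by
      rw [hτ']
      nlinarith [mul_le_mul_of_nonneg_right hr1 (by positivity : (0:ℝ) ≤ A * k)]
    have hub : ∀ v ∈ U '' Ici 0, v ≤ τ := by
      rintro v ⟨α, hα, rfl⟩
      rw [hUx α]
      set x := Real.exp (-(k * α)) with hxdef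
      have hx0 : 0 < x := Real.exp_pos _
      have hx1 : x ≤ 1 := by
        rw [hxdef]
        exact Real.exp_le_one_iff.mpr (by nlinarith [mul_nonneg hk.le (mem_Ici.mp hα)])
      set s := x ^ p with hs
      have hs0 : 0 < s := Real.rpow_pos_of_pos hx0 p
      have hs1 : s ≤ 1 := Real.rpow_le_one hx0.le hx1 hp0.le
      have key := keyA p 1 x hp0 one_pos hx0.le
      rw [Real.one_rpow, ← hs] at key
      have hCp1 : C * (p + 1) = A := by
        rw [hC, hp]; field_simp; ring
      have hCp2 : A ≤ p * τ := by
        rw [hp, div_mul_eq_mul_div, le_div_iff₀ hk]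
        nlinarith [hτA]
      have hCp : C * (p + 1) ≤ p * τ := hCp1 ▸ hCp2
      nlinarith [mul_nonneg (sub_nonneg.2 hCp) (sub_nonneg.2 hs1),
        mul_le_mul_of_nonneg_left key hC0.le, hp0, hs0.le, hC0.le]
    have hgr : IsGreatest (U '' Ici 0) τ := ⟨⟨0, self_mem_Ici, hU0⟩, hub⟩
    rw [hM, hgr.csSup_eq]
  have hr0 : 0 ≤ r := by rw [hr]; positivity
  have hCleτ : 1 ≤ r → C ≤ τ := by
    intro hr1
    have hτA : A * k ≤ lam * τ := by
      rw [hτ']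
      nlinarith [mul_le_mul_of_nonneg_right hr1 (by positivity : (0:ℝ) ≤ A * k)]
    rw [hC, div_le_iff₀ hkl]
    nlinarith
  refine ⟨fact1, ?_, fun h0 => fact2 h0⟩
  intro hnot
  push_neg at hnot
  rcases eq_or_lt_of_le hr0 with heq | hpos
  · have hlτ : lam * τ = 0 := by rw [hτ', ← heq]; ring
    have hτ0 : τ = 0 := (mul_eq_zero.mp hlτ).resolve_left hlam.ne'
    rw [fact2 hτ0, hτ0, max_eq_right hC0.le]
  · have hr1 : 1 ≤ r := hnot hpos
    rw [fact3 hr1, max_eq_left (hCleτ hr1)]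
end

section
/- Let A, k, λ > 0, δ ≥ 0 with δ < k + λ, and τ > 0 with r := δτ/(Ak) ∈ (0,1). Define U(α) = (Ak/(k+λ))(1 − e^{−(k+λ)α}) + τe^{−δα}. Then U has a unique interior maximizer α* = (1/(k+λ−δ))·ln(Ak/(δτ)), and the maximal value is M(τ) = (Ak/(k+λ))·(1 − r^{(k+λ)/(k+λ−δ)}) + τ·r^{δ/(k+λ−δ)}. Setting δ = λ recovers α* = (1/k)·ln(Ak/(λτ)). -/
open Set

/-- Two-hazard generalization: unique interior maximizer and the closed-form
value of the delay envelope; `δ = λ` recovers the one-hazard maximizer. -/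
theorem stmt_18 (A k lam δ τ : ℝ) (hA : 0 < A) (hk : 0 < k) (hlam : 0 < lam)
    (hδ : 0 ≤ δ) (hδlt : δ < k + lam) (hτ : 0 < τ)
    (r : ℝ) (hr : r = δ * τ / (A * k)) (hr0 : 0 < r) (hr1 : r < 1)
    (U : ℝ → ℝ)
    (hU : U = fun α => (A * k / (k + lam)) * (1 - Real.exp (-(k + lam) * α))
      + τ * Real.exp (-δ * α))
    (αstar : ℝ) (hαstar : αstar = (1 / (k + lam - δ)) * Real.log (A * k / (δ * τ))) :
    (0 < αstar)
    ∧ IsMaxOn U (Ici 0) αstar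
    ∧ (∀ α ∈ Ici (0:ℝ), α ≠ αstar → U α < U αstar)
    ∧ U αstar = (A * k / (k + lam)) * (1 - r ^ ((k + lam) / (k + lam - δ)))
        + τ * r ^ (δ / (k + lam - δ))
    ∧ (δ = lam → αstar = (1 / k) * Real.log (A * k / (lam * τ))) := by
  have hAk : 0 < A * k := mul_pos hA hk
  have hδpos : 0 < δ := by
    by_contra h
    push_neg at h
    have hδ0 : δ = 0 := le_antisymm h hδ
    rw [hr, hδ0] at hr0
    simp at hr0
  have hc : 0 < k + lam := by linarith
  have hs : 0 < k + lam - δ := by linarith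
  set c := k + lam with hcdef
  set s := k + lam - δ with hsdef
  have hδτ : 0 < δ * τ := mul_pos hδpos hτ
  have hrinv : r⁻¹ = A * k / (δ * τ) := by rw [hr, inv_div]
  have hlogr : Real.log r < 0 := Real.log_neg hr0 hr1
  have hα2 : αstar = -Real.log r / s := by
    rw [hαstar, ← hrinv, Real.log_inv]
    ring
  have hαpos : 0 < αstar := by
    rw [hα2]
    exact div_pos (by linarith) hs
  -- derivative
  have hderiv : ∀ α : ℝ, HasDerivAt U
      (Real.exp (-δ * α) * (A * k * Real.exp (-s * α) - δ * τ)) α := by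
    intro α
    have h1 : HasDerivAt (fun α : ℝ => Real.exp (-c * α)) (Real.exp (-c * α) * (-c * 1)) α :=
      ((hasDerivAt_id α).const_mul (-c)).exp
    have h2 : HasDerivAt (fun α : ℝ => Real.exp (-δ * α)) (Real.exp (-δ * α) * (-δ * 1)) α :=
      ((hasDerivAt_id α).const_mul (-δ)).exp
    have h3 : HasDerivAt U
        ((A * k / c) * (0 - (Real.exp (-c * α) * (-c * 1))) + τ * (Real.exp (-δ * α) * (-δ * 1))) α := by
      rw [hU]
      exact (((hasDerivAt_const α (1:ℝ)).sub h1).const_mul (A * k / c)).add (h2.const_mul τ)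
    convert h3 using 1
    have hes : Real.exp (-s * α) * Real.exp (-δ * α) = Real.exp (-c * α) := by
      rw [← Real.exp_add, hsdef, hcdef]; congr 1; ring
    have hc0 : c ≠ 0 := ne_of_gt hc
    rw [← hes]
    field_simp
    ring
  have hAkr : A * k * r = δ * τ := by
    rw [hr]; field_simp
  -- sign of the derivative
  have hsign_pos : ∀ α : ℝ, α < αstar → 0 < A * k * Real.exp (-s * α) - δ * τ := by
    intro α hα
    rw [hα2] at hα
    have h1 : -s * α > Real.log r := by
      have := (lt_div_iff₀ hs).mp hα
      linarith
    have h2 : Real.exp (Real.log r) < Real.exp (-s * α) := Real.exp_lt_exp.mpr h1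
    rw [Real.exp_log hr0] at h2
    nlinarith
  have hsign_neg : ∀ α : ℝ, αstar < α → A * k * Real.exp (-s * α) - δ * τ < 0 := by
    intro α hα
    rw [hα2] at hα
    have h1 : -s * α < Real.log r := by
      have := (div_lt_iff₀ hs).mp hα
      linarith
    have h2 : Real.exp (-s * α) < Real.exp (Real.log r) := Real.exp_lt_exp.mpr h1
    rw [Real.exp_log hr0] at h2
    nlinarith
  have hcont : Continuous U := by
    rw [hU]; fun_prop
  -- strict monotone on Icc 0 αstar
  have hmono : StrictMonoOn U (Icc 0 αstar) := by
    apply strictMonoOn_of_deriv_pos (convex_Icc _ _) hcont.continuousOn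
    intro x hx
    rw [interior_Icc] at hx
    rw [(hderiv x).deriv]
    exact mul_pos (Real.exp_pos _) (hsign_pos x hx.2)
  have hanti : StrictAntiOn U (Ici αstar) := by
    apply strictAntiOn_of_deriv_neg (convex_Ici _) hcont.continuousOn
    intro x hx
    rw [interior_Ici] at hx
    rw [(hderiv x).deriv]
    exact mul_neg_of_pos_of_neg (Real.exp_pos _) (hsign_neg x hx)
  have hstrict : ∀ α ∈ Ici (0:ℝ), α ≠ αstar → U α < U αstar := by
    intro α hα hne
    rcases lt_or_gt_of_ne hne with h | h
    · exact hmono ⟨hα, le_of_lt h⟩ ⟨le_of_lt hαpos, le_refl _⟩ h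
    · exact hanti (mem_Ici.mpr (le_refl _)) (mem_Ici.mpr (le_of_lt h)) h
  refine ⟨hαpos, ?_, hstrict, ?_, ?_⟩
  · intro α hα
    by_cases hne : α = αstar
    · simp [hne]
    · exact le_of_lt (hstrict α hα hne)
  · -- value
    have he1 : Real.exp (-c * αstar) = r ^ (c / s) := by
      rw [Real.rpow_def_of_pos hr0, hα2]
      congr 1; field_simp
    have he2 : Real.exp (-δ * αstar) = r ^ (δ / s) := by
      rw [Real.rpow_def_of_pos hr0, hα2]
      congr 1; field_simp
    rw [hU]
    simp only
    rw [he1, he2]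
  · intro hδl
    rw [hαstar, hsdef, hδl]
    congr 2
    ring
end
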